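/- (Main Theorem) Every *-representation of a discrete twisted C*-dynamical system is automatically L¹-contractive: if π: Cc(G,A) → C is a *-homomorphism from the twisted convolution *-algebra into a C*-algebra C, then ‖π(f)‖ ≤ ‖f‖₁ := Σ_{x∈G} k·‖f(x)‖ for every finitely supported f: G → A. -/
import Mathlib


open scoped Pointwise

noncomputable section

variable {G : Type*} [Group G] {A : Type*} [NonUnitalCStarAlgebra A]
variable {M : Type*} [CStarAlgebra M]

/-- Twisted convolution on finitely supported `A`-valued functions:
`(f ⋆ g)(x) = ∑ y, k • f y * α y (g (y⁻¹ x)) * ω (y, y⁻¹ x)`, where the product with the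
multiplier `ω (y, y⁻¹ x) ∈ M(A)` is implemented by the bilinear map `mr : A → M(A) → A`. -/
noncomputable def tconv (k : ℝ) (α : G → A ≃⋆ₐ[ℂ] A) (ω : G → G → M)
    (mr : A →ₗ[ℂ] M →ₗ[ℂ] A) (f g : G →₀ A) : G →₀ A :=
  Finsupp.ofSupportFinite
    (fun x => ∑ y ∈ f.support, k • mr (f y * α y (g (y⁻¹ * x))) (ω y (y⁻¹ * x)))
    (Set.Finite.subset (f.support.finite_toSet.mul g.support.finite_toSet) (by
      intro x hx
      simp only [Function.mem_support] at hx
      by_contra hxm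
      apply hx
      apply Finset.sum_eq_zero
      intro y hy
      have hg : g (y⁻¹ * x) = 0 := by
        by_contra hgy
        have h := Set.mul_mem_mul (Finset.mem_coe.mpr hy)
          (Finset.mem_coe.mpr (Finsupp.mem_support_iff.mpr hgy))
        rw [mul_inv_cancel_left] at h
        exact hxm h
      simp [hg]))

/-- Twisted involution: `f^*(x) = ω (x, x⁻¹)^* * α x (f (x⁻¹)^*)`, where left multiplication
by the multiplier is implemented by the bilinear map `ml : M(A) → A → A`. -/
noncomputable def tinvo (α : G → A ≃⋆ₐ[ℂ] A) (ω : G → G → M)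
    (ml : M →ₗ[ℂ] A →ₗ[ℂ] A) (f : G →₀ A) : G →₀ A :=
  Finsupp.ofSupportFinite
    (fun x => ml (star (ω x x⁻¹)) (α x (star (f x⁻¹))))
    (Set.Finite.subset f.support.finite_toSet.inv (by
      intro x hx
      simp only [Function.mem_support] at hx
      by_contra hxm
      apply hx
      have hf : f x⁻¹ = 0 := by
        by_contra h
        have h2 := Set.inv_mem_inv.mpr (Finset.mem_coe.mpr (Finsupp.mem_support_iff.mpr h))
        rw [inv_inv] at h2
        exact hxm h2
      simp [hf]))

theorem tconv_single (k : ℝ) (α : G → A ≃⋆ₐ[ℂ] A) (ω : G → G → M)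
    (mr : A →ₗ[ℂ] M →ₗ[ℂ] A) (r s : G) (a b : A) :
    tconv k α ω mr (Finsupp.single r a) (Finsupp.single s b)
      = Finsupp.single (r * s) (k • mr (a * α r b) (ω r s)) := by
  ext x
  show (Finsupp.ofSupportFinite _ _ : G →₀ A) x = _
  rw [Finsupp.ofSupportFinite_coe]
  rw [Finset.sum_subset Finsupp.support_single_subset (by
    intro y _ hyn
    simp [Finsupp.notMem_support_iff.mp hyn])]
  rw [Finset.sum_singleton, Finsupp.single_eq_same]
  by_cases h : x = r * s
  · subst h
    simp
  · have h1 : (Finsupp.single s b) (r⁻¹ * x) = 0 := by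
      rw [Finsupp.single_apply_eq_zero]
      intro hs
      exact absurd (by rw [← hs, mul_inv_cancel_left]) h
    have h2 : (Finsupp.single (r * s) (k • mr (a * α r b) (ω r s))) x = 0 := by
      rw [Finsupp.single_apply_eq_zero]
      intro hs; exact absurd hs h
    simp [h1, h2]

theorem tinvo_single (α : G → A ≃⋆ₐ[ℂ] A) (ω : G → G → M)
    (ml : M →ₗ[ℂ] A →ₗ[ℂ] A) (r : G) (a : A) :
    tinvo α ω ml (Finsupp.single r a)
      = Finsupp.single r⁻¹ (ml (star (ω r⁻¹ r)) (α r⁻¹ (star a))) := by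
  ext x
  show (Finsupp.ofSupportFinite _ _ : G →₀ A) x = _
  rw [Finsupp.ofSupportFinite_coe]
  by_cases h : x = r⁻¹
  · subst h
    simp
  · have h1 : (Finsupp.single r a) x⁻¹ = 0 := by
      rw [Finsupp.single_apply_eq_zero]
      intro hs
      exact absurd (by rw [← hs, inv_inv]) h
    have h2 : (Finsupp.single r⁻¹ (ml (star (ω r⁻¹ r)) (α r⁻¹ (star a)))) x = 0 := by
      rw [Finsupp.single_apply_eq_zero]
      intro hs; exact absurd hs h
    simp [h1, h2]

/-- **Main theorem**: every *-representation of a discrete twisted C*-dynamical system is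
automatically contractive for the L¹-norm `‖f‖₁ = ∑ x, k‖f(x)‖`. -/
theorem norm_pi_le_L1
    (ι : A →⋆ₙₐ[ℂ] M) (hι : Function.Injective ι)
    (mr : A →ₗ[ℂ] M →ₗ[ℂ] A) (hmr : ∀ (a : A) (m : M), ι (mr a m) = ι a * m)
    (ml : M →ₗ[ℂ] A →ₗ[ℂ] A) (hml : ∀ (m : M) (a : A), ι (ml m a) = m * ι a)
    (α : G → A ≃⋆ₐ[ℂ] A) (αM : G → M ≃⋆ₐ[ℂ] M)
    (hαM : ∀ (r : G) (a : A), αM r (ι a) = ι (α r a))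
    (ω : G → G → M) (hω : ∀ r s : G, ω r s ∈ unitary M)
    (hα1 : ∀ a : A, α 1 a = a)
    (hω1 : ∀ r : G, ω 1 r = 1 ∧ ω r 1 = 1)
    (hact : ∀ (r s : G) (a : A), ι (α r (α s a)) = ω r s * ι (α (r * s) a) * star (ω r s))
    (hcoc : ∀ r s t : G, αM r (ω s t) * ω r (s * t) = ω r s * ω (r * s) t)
    (k : ℝ) (hk : 0 < k)
    {C : Type*} [NonUnitalCStarAlgebra C] (π : (G →₀ A) →ₗ[ℂ] C)
    (hπmul : ∀ f g : G →₀ A, π (tconv k α ω mr f g) = π f * π g)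
    (hπstar : ∀ f : G →₀ A, π (tinvo α ω ml f) = star (π f))
    (f : G →₀ A) :
    ‖π f‖ ≤ ∑ x ∈ f.support, k * ‖f x‖ := by
  clear hact hcoc hαM
  -- `mr a 1 = a` and `ml 1 a = a`
  have hmr1 : ∀ a : A, mr a (1 : M) = a := fun a => hι (by rw [hmr, mul_one])
  have hml1 : ∀ a : A, ml (1 : M) a = a := fun a => hι (by rw [hml, one_mul])
  -- convolution and involution of point masses at `1`
  have hconv1 : ∀ a b : A, tconv k α ω mr (Finsupp.single 1 a) (Finsupp.single 1 b)
      = Finsupp.single (1 : G) (k • (a * b)) := by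
    intro a b
    rw [tconv_single, one_mul, (hω1 1).1, hmr1, hα1]
  have hinv1 : ∀ a : A, tinvo α ω ml (Finsupp.single 1 a)
      = Finsupp.single (1 : G) (star a) := by
    intro a
    rw [tinvo_single, inv_one, (hω1 1).1, star_one, hml1, hα1]
  -- the rescaled *-homomorphism `A → C`, `a ↦ π (single 1 (k⁻¹ • a))`
  have hkne : (k : ℝ) ≠ 0 := ne_of_gt hk
  let ψ : A →⋆ₙₐ[ℂ] C :=
    { toFun := fun a => π (Finsupp.single (1 : G) ((k⁻¹ : ℝ) • a))
      map_smul' := by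
        intro c a
        show π (Finsupp.single (1 : G) ((k⁻¹ : ℝ) • (c • a))) = _
        rw [smul_comm, ← Finsupp.smul_single, map_smul]
        rfl
      map_zero' := by simp
      map_add' := by
        intro a b
        show π (Finsupp.single (1 : G) ((k⁻¹ : ℝ) • (a + b)))
          = π (Finsupp.single (1 : G) ((k⁻¹ : ℝ) • a)) + π (Finsupp.single (1 : G) ((k⁻¹ : ℝ) • b))
        rw [smul_add, Finsupp.single_add, map_add]
      map_mul' := by
        intro a b
        show π (Finsupp.single (1 : G) ((k⁻¹ : ℝ) • (a * b)))
          = π (Finsupp.single (1 : G) ((k⁻¹ : ℝ) • a)) * π (Finsupp.single (1 : G) ((k⁻¹ : ℝ) • b))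
        rw [← hπmul, hconv1]
        congr 2
        rw [smul_mul_smul_comm, smul_smul, mul_inv_cancel_left₀ hkne]
      map_star' := by
        intro a
        show π (Finsupp.single (1 : G) ((k⁻¹ : ℝ) • star a))
          = star (π (Finsupp.single (1 : G) ((k⁻¹ : ℝ) • a)))
        rw [← hπstar, hinv1, star_smul, star_trivial ((k⁻¹ : ℝ) : ℝ)] }
  have hφ : ∀ b : A, ‖π (Finsupp.single (1 : G) b)‖ ≤ k * ‖b‖ := by
    intro b
    have h1 : π (Finsupp.single (1 : G) b) = ψ (k • b) := by
      show _ = π (Finsupp.single (1 : G) ((k⁻¹ : ℝ) • (k • b)))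
      rw [smul_smul, inv_mul_cancel₀ hkne, one_smul]
    rw [h1]
    calc ‖ψ (k • b)‖ ≤ ‖k • b‖ := NonUnitalStarAlgHom.norm_apply_le ψ (k • b)
      _ = k * ‖b‖ := by
        rw [norm_smul, Real.norm_eq_abs, abs_of_pos hk]
  -- the key bound on point masses
  have hsingle : ∀ (r : G) (a : A), ‖π (Finsupp.single r a)‖ ≤ k * ‖a‖ := by
    intro r a
    set c₀ : A := ml (star (ω r⁻¹ r)) (α r⁻¹ (star a)) with hc₀
    set c : A := mr (c₀ * α r⁻¹ a) (ω r⁻¹ r) with hc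
    have hcstar : star (π (Finsupp.single r a)) * π (Finsupp.single r a)
        = π (Finsupp.single (1 : G) (k • c)) := by
      rw [← hπstar, ← hπmul, tinvo_single, tconv_single, inv_mul_cancel, hc, hc₀]
    have hnormc : ‖c‖ = ‖a‖ * ‖a‖ := by
      have hιc : ι c = star (ω r⁻¹ r) * ι (α r⁻¹ (star a * a)) * ω r⁻¹ r := by
        rw [hc, hmr, map_mul, hc₀, hml, map_mul]
        simp only [map_mul, mul_assoc]
      have h2 : ‖ι c‖ = ‖ι (α r⁻¹ (star a * a))‖ := by
        rw [hιc, CStarRing.norm_mul_mem_unitary _ (hω r⁻¹ r),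
          CStarRing.norm_mem_unitary_mul _ (Unitary.star_mem (hω r⁻¹ r))]
      rw [← NonUnitalStarAlgHom.norm_map ι hι c, h2,
        NonUnitalStarAlgHom.norm_map ι hι,
        NonUnitalStarAlgHom.norm_map (α r⁻¹) (α r⁻¹).injective,
        CStarRing.norm_star_mul_self]
    have hsq : ‖π (Finsupp.single r a)‖ * ‖π (Finsupp.single r a)‖ ≤ (k * ‖a‖) * (k * ‖a‖) := by
      calc ‖π (Finsupp.single r a)‖ * ‖π (Finsupp.single r a)‖
          = ‖star (π (Finsupp.single r a)) * π (Finsupp.single r a)‖ := by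
            rw [CStarRing.norm_star_mul_self]
        _ = ‖π (Finsupp.single (1 : G) (k • c))‖ := by rw [hcstar]
        _ ≤ k * ‖k • c‖ := hφ _
        _ = (k * ‖a‖) * (k * ‖a‖) := by
            rw [norm_smul, Real.norm_eq_abs, abs_of_pos hk, hnormc]
            ring
    exact nonneg_le_nonneg_of_sq_le_sq (mul_nonneg (le_of_lt hk) (norm_nonneg a)) hsq
  -- conclude by writing `f` as a sum of point masses
  conv_lhs => rw [← Finsupp.sum_single f, Finsupp.sum, map_sum]
  calc ‖∑ x ∈ f.support, π (Finsupp.single x (f x))‖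
      ≤ ∑ x ∈ f.support, ‖π (Finsupp.single x (f x))‖ := norm_sum_le _ _
    _ ≤ ∑ x ∈ f.support, k * ‖f x‖ := Finset.sum_le_sum fun x _ => hsingle x (f x)
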